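/- arXiv:2305.12813 — 5 statements merged into one kernel-verified Lean document; each statement's English description precedes it below -/
import Mathlib

section
/- Let X ⊆ ℝ^n be compact, X_s ⊆ X compact with 0 ∈ X_s, and let f : ℝ^n → ℝ^n be Lipschitz continuous and satisfy the stability prior with respect to X_s. Suppose L : ℝ^n → ℝ is Lipschitz continuous and there exists α ∈ ℝ such that: (1) X = {x ∈ ℝ^n : L(x) ≤ α}; (2) for every x ∈ X \ X_s and every y in the Clarke generalized gradient ∂_Cl L(x), ⟨f(x), y⟩ < 0 (Euclidean inner product). Then for every x₀ in the interior of X, every solution of x' = f(x) with initial condition x₀ satisfies x(t) → 0 as t → ∞. -/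
/-!
Away from `Xs`, hypothesis (2) and compactness give `c, r > 0` such that at every point of
differentiability within `r` of a point `p` of `X` that is `ε`-far from `Xs`, the gradient of
`L` has inner product at most `-c` with `f p`. By Rademacher's theorem `L` is differentiable
almost everywhere on almost every segment, so integrating gives `L (p + h • f p) ≤ L p - c h`
for small `h ≥ 0`; hence `L ∘ x` decreases at rate `c / 2` as long as the trajectory is `ε`-far
from `Xs`, which also keeps it in the sublevel set `X`. Since `L` is bounded below on the compact
set `X`, the trajectory eventually comes `ε`-close to `Xs`.

On the other hand, `f` being globally Lipschitz, solutions exist for all times, so by the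
stability prior every point of `Xs` is attracted to `0`; by Grönwall's inequality this persists
for nearby initial points. Thus `Xs` lies in the interior of the basin of attraction of `0`, and
by compactness so does an `ε`-neighbourhood of `Xs`.
-/

open Filter Metric

/-- `x : ℝ → ℝⁿ` is a solution of `x' = F(x)` with initial condition `x₀`:
`x 0 = x₀` and for every `t ≥ 0`, `x` is differentiable at `t` with derivative `F (x t)`. -/
def IsSolution {n : ℕ} (F : EuclideanSpace ℝ (Fin n) → EuclideanSpace ℝ (Fin n))
    (x₀ : EuclideanSpace ℝ (Fin n)) (x : ℝ → EuclideanSpace ℝ (Fin n)) : Prop :=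
  x 0 = x₀ ∧ ∀ t : ℝ, 0 ≤ t → HasDerivAt x (F (x t)) t

/-- `F` satisfies the stability prior with respect to `Xs ∋ 0`: `F 0 = 0`, there is `δ > 0`
such that every solution starting in the open ball of radius `δ` converges to `0`, and every
solution starting in `Xs` converges to `0`. -/
def StabilityPrior {n : ℕ} (F : EuclideanSpace ℝ (Fin n) → EuclideanSpace ℝ (Fin n))
    (Xs : Set (EuclideanSpace ℝ (Fin n))) : Prop :=
  F 0 = 0 ∧
  (∃ δ > (0:ℝ), ∀ x : ℝ → EuclideanSpace ℝ (Fin n), ‖x 0‖ < δ →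
    (∀ t : ℝ, 0 ≤ t → HasDerivAt x (F (x t)) t) → Tendsto x atTop (nhds 0)) ∧
  (∀ x : ℝ → EuclideanSpace ℝ (Fin n), x 0 ∈ Xs →
    (∀ t : ℝ, 0 ≤ t → HasDerivAt x (F (x t)) t) → Tendsto x atTop (nhds 0))

/-- The Clarke generalized gradient of `L` at `x`: the convex hull of the set of limits of
gradients of `L` at nearby points of differentiability. -/
def ClarkeGradient {n : ℕ} (L : EuclideanSpace ℝ (Fin n) → ℝ)
    (x : EuclideanSpace ℝ (Fin n)) : Set (EuclideanSpace ℝ (Fin n)) :=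
  convexHull ℝ {y | ∀ ε > (0:ℝ), ∃ z, ‖x - z‖ < ε ∧ DifferentiableAt ℝ L z ∧
    ‖y - gradient L z‖ < ε}

open MeasureTheory Set Topology
open scoped NNReal

theorem le_sub_mul_of_forall_eventually_le {g : ℝ → ℝ} {a b c : ℝ} (hab : a ≤ b)
    (hg : ContinuousOn g (Icc a b))
    (hstep : ∀ t ∈ Ico a b, g t ≤ g a - c * (t - a) →
      ∀ᶠ s in 𝓝[>] t, g s ≤ g t - c * (s - t)) :
    g b ≤ g a - c * (b - a) := by
  set S := {t | g t ≤ g a - c * (t - a)}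
  have hclosed : IsClosed (S ∩ Icc a b) := by
    rw [inter_comm]
    exact (hg.prodMk (continuousOn_const.sub (continuousOn_const.mul
      (continuousOn_id.sub continuousOn_const)))).preimage_isClosed_of_isClosed isClosed_Icc
      OrderClosedTopology.isClosed_le'
  have hgt : ∀ t ∈ S ∩ Ico a b, S ∈ 𝓝[>] t := by
    rintro t ⟨htS, ht⟩
    filter_upwards [hstep t ht htS] with s hs
    show g s ≤ g a - c * (s - a)
    linarith [show g t ≤ g a - c * (t - a) from htS]
  exact hclosed.Icc_subset_of_forall_mem_nhdsWithin (by simp [S]) hgt ⟨hab, le_rfl⟩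

section LipschitzDescent

variable {E : Type*} [NormedAddCommGroup E] [NormedSpace ℝ E] {L : E → ℝ} {K : ℝ≥0}

theorem LipschitzWith.le_add_mul_of_ae_deriv_le {φ : ℝ → ℝ} (hφ : LipschitzWith K φ)
    {a b C : ℝ} (hab : a ≤ b) (hderiv : ∀ᵐ s, s ∈ Icc a b → deriv φ s ≤ C) :
    φ b ≤ φ a + C * (b - a) := by
  have hac := (hφ.lipschitzOnWith (s := uIcc a b)).absolutelyContinuousOnInterval
  have hint : ∫ s in a..b, deriv φ s ≤ ∫ _ in a..b, C :=
    intervalIntegral.integral_mono_ae_restrict hab hac.intervalIntegrable_deriv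
      intervalIntegrable_const ((ae_restrict_iff' measurableSet_Icc).2 hderiv)
  rw [hac.integral_deriv_eq_sub, intervalIntegral.integral_const, smul_eq_mul] at hint
  linarith

theorem LipschitzWith.eventually_le_sub_mul_of_hasDerivAt (hL : LipschitzWith K L)
    {x : ℝ → E} {v : E} {t c c' : ℝ} (hx : HasDerivAt x v t)
    (hdesc : ∀ᶠ h in 𝓝[>] 0, L (x t + h • v) ≤ L (x t) - c * h) (hc : c' < c) :
    ∀ᶠ s in 𝓝[>] t, L (x s) ≤ L (x t) - c' * (s - t) := by
  set κ := (c - c') / (K + 1)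
  have hκ : K * κ ≤ c - c' := by
    rw [mul_div_assoc', div_le_iff₀ (by positivity)]
    nlinarith [K.2]
  have hshift : Tendsto (· - t) (𝓝[>] t) (𝓝[>] 0) :=
    (map_subRight_nhdsGT (c := t) (a := t)).trans_le (by rw [sub_self])
  filter_upwards [hshift.eventually hdesc, nhdsWithin_le_nhds
    ((hasDerivAt_iff_isLittleO.1 hx).def (by positivity : 0 < κ)), self_mem_nhdsWithin]
    with s hs hlin hts
  have hts : 0 < s - t := sub_pos.2 hts
  rw [Real.norm_of_nonneg hts.le] at hlin
  have hnear : L (x s) - L (x t + (s - t) • v) ≤ K * (κ * (s - t)) := by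
    refine (le_abs_self _).trans ((hL.dist_le_mul _ _).trans ?_)
    rw [dist_eq_norm, sub_add_eq_sub_sub]
    exact mul_le_mul_of_nonneg_left hlin K.2
  nlinarith

variable [FiniteDimensional ℝ E]

theorem LipschitzWith.exists_mem_ae_differentiableAt_add_smul (hL : LipschitzWith K L) (v : E)
    {U : Set E} (hU : IsOpen U) (hne : U.Nonempty) :
    ∃ a ∈ U, ∀ᵐ s : ℝ, DifferentiableAt ℝ L (a + s • v) := by
  borelize E
  set μ : Measure E := Measure.addHaar
  have hmeas : MeasurableSet {q : E × ℝ | DifferentiableAt ℝ L (q.1 + q.2 • v)} :=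
    (measurableSet_of_differentiableAt ℝ L).preimage (by fun_prop)
  have hae : ∀ᵐ a ∂μ, ∀ᵐ s : ℝ, DifferentiableAt ℝ L (a + s • v) := by
    refine (Measure.ae_ae_comm hmeas).2 (Eventually.of_forall fun s => ?_)
    have h := hL.ae_differentiableAt (μ := μ)
    rw [ae_iff] at h ⊢
    exact (measure_preimage_add_right μ (s • v) _).trans h
  exact (hae.and_frequently (frequently_ae_mem_iff.2 (hU.measure_pos μ hne).ne')).exists.imp
    fun a ha => ⟨ha.2, ha.1⟩

theorem LipschitzWith.le_sub_mul_of_fderiv_le (hL : LipschitzWith K L) {p v : E} {r c h : ℝ}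
    (hdesc : ∀ z ∈ ball p r, DifferentiableAt ℝ L z → fderiv ℝ L z v ≤ -c)
    (hh : 0 ≤ h) (hhr : h * ‖v‖ < r) : L (p + h • v) ≤ L p - c * h := by
  -- Along a.e. line parallel to `v` the function `L` is differentiable a.e.; use such a line
  -- through a point `a` that is `η`-close to `p`, then let `η → 0`.
  have hclose : ∀ η ∈ Ioo 0 (r - h * ‖v‖),
      L (p + h • v) ≤ L p - c * h + 2 * K * η := by
    rintro η ⟨hη, hηr⟩
    obtain ⟨a, ha, hdiff⟩ :=
      hL.exists_mem_ae_differentiableAt_add_smul v isOpen_ball (nonempty_ball.2 hη)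
    have hline : LipschitzWith (K * ‖v‖₊) (fun s : ℝ => L (a + s • v)) :=
      hL.comp (LipschitzWith.of_dist_le_mul fun s s' => by
        simp [dist_eq_norm, ← sub_smul, norm_smul, mul_comm])
    have hφ := hline.le_add_mul_of_ae_deriv_le hh (C := -c) <| by
      filter_upwards [hdiff] with s hs hsI
      have hderiv : HasDerivAt (fun s : ℝ => L (a + s • v)) (fderiv ℝ L (a + s • v) v) s :=
        hs.hasFDerivAt.comp_hasDerivAt s
          (by simpa using ((hasDerivAt_id s).smul_const v).const_add a)
      rw [hderiv.deriv]
      refine hdesc _ ?_ hs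
      calc dist (a + s • v) p ≤ ‖s • v‖ + dist a p := by
            simpa using dist_triangle (a + s • v) a p
        _ < h * ‖v‖ + η := by
          rw [norm_smul, Real.norm_of_nonneg hsI.1]
          exact add_lt_add_of_le_of_lt (mul_le_mul_of_nonneg_right hsI.2 (norm_nonneg v)) ha
        _ < r := by linarith
    have hend : |L (p + h • v) - L (a + h • v)| ≤ K * η := by
      rw [← Real.dist_eq]
      exact (hL.dist_le_mul _ _).trans (by rw [dist_add_right, dist_comm]; gcongr; exact ha.le)
    have hstart : |L a - L p| ≤ K * η := by
      rw [← Real.dist_eq]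
      exact (hL.dist_le_mul _ _).trans (by gcongr; exact ha.le)
    simp only [zero_smul, add_zero, sub_zero] at hφ
    linarith [abs_le.1 hend, abs_le.1 hstart]
  refine ge_of_tendsto (f := fun η => L p - c * h + 2 * K * η) ?_ ?_ (x := 𝓝[>] 0)
  · exact ((continuous_const.add (continuous_const.mul continuous_id)).tendsto' 0 _
      (by simp)).mono_left nhdsWithin_le_nhds
  · filter_upwards [Ioo_mem_nhdsGT (sub_pos.2 hhr)] with η hη using hclose η hη

end LipschitzDescent

section ForwardSolutions

variable {E : Type*} [NormedAddCommGroup E] [NormedSpace ℝ E] {F : E → E} {x : ℝ → E}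

def IsForwardSolution (F : E → E) (x : ℝ → E) : Prop :=
  ∀ t, 0 ≤ t → HasDerivAt x (F (x t)) t

theorem IsForwardSolution.comp_const_add (hx : IsForwardSolution F x) {T : ℝ} (hT : 0 ≤ T) :
    IsForwardSolution F (fun s => x (T + s)) :=
  fun s hs => (hx (T + s) (by linarith)).comp_const_add T s

theorem hasDerivAt_of_forall_hasDerivWithinAt_Icc_nat {g : ℝ → E} {τ : ℝ} (hτ : 0 < τ)
    (hzero : HasDerivWithinAt x (g 0) (Icc (-τ) 0) 0)
    (hstep : ∀ k : ℕ, ∀ t ∈ Icc (k * τ) (k * τ + τ),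
      HasDerivWithinAt x (g t) (Icc (k * τ) (k * τ + τ)) t)
    {t : ℝ} (ht : 0 ≤ t) : HasDerivAt x (g t) t := by
  set k := ⌊t / τ⌋₊
  have hkt : k * τ ≤ t := by simpa [le_div_iff₀ hτ] using Nat.floor_le (div_nonneg ht hτ.le)
  have htk : t < k * τ + τ := by
    have := Nat.lt_floor_add_one (t / τ)
    rw [div_lt_iff₀ hτ] at this
    linarith
  rcases hkt.eq_or_lt with hkt | hkt
  · have hleft : HasDerivWithinAt x (g t) (Icc (t - τ) t) t := by
      rw [← hkt]
      cases k with
      | zero => simpa using hzero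
      | succ j =>
        have h := hstep j ((j + 1 : ℕ) * τ) ⟨by push_cast; linarith, by push_cast; linarith⟩
        rwa [show (j : ℝ) * τ = (j + 1 : ℕ) * τ - τ by push_cast; ring, sub_add_cancel] at h
    have h := hleft.union (hkt ▸ hstep k t ⟨hkt.le, htk.le⟩)
    rw [Icc_union_Icc_eq_Icc (by linarith) (by linarith)] at h
    exact h.hasDerivAt (Icc_mem_nhds (by linarith) (by linarith))
  · exact (hstep k t ⟨hkt.le, htk.le⟩).hasDerivAt (Icc_mem_nhds hkt htk)

theorem exists_isForwardSolution_of_forall_exists_Icc {τ : ℝ} (hτ : 0 < τ)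
    (hloc : ∀ w : E, ∃ z : ℝ → E, z 0 = w ∧
      ∀ t ∈ Icc (-τ) τ, HasDerivWithinAt z (F (z t)) (Icc (-τ) τ) t) (w : E) :
    ∃ x : ℝ → E, x 0 = w ∧ IsForwardSolution F x := by
  choose sol hsol0 hsol using hloc
  -- On `[k τ, k τ + τ]` follow the local solution from `start k`, its value at time `k τ`.
  set start : ℕ → E := fun k => (fun q => sol q τ)^[k] w
  set piece : ℕ → ℝ → E := fun k t => sol (start k) (t - k * τ)
  set y : ℝ → E := fun t => piece ⌊t / τ⌋₊ t
  have hpiece (k : ℕ) : ∀ t ∈ Icc (k * τ - τ) (k * τ + τ),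
      HasDerivWithinAt (piece k) (F (piece k t)) (Icc (k * τ - τ) (k * τ + τ)) t := by
    intro t ht
    have hmaps : MapsTo (· - k * τ) (Icc (k * τ - τ) (k * τ + τ)) (Icc (-τ) τ) :=
      fun s hs => ⟨by linarith [hs.1], by linarith [hs.2]⟩
    simpa [piece, Function.comp_def] using (hsol (start k) _ (hmaps ht)).scomp t
      ((hasDerivAt_id t).sub_const _).hasDerivWithinAt hmaps
  have hy_piece (k : ℕ) : EqOn y (piece k) (Icc (k * τ) (k * τ + τ)) := by
    intro t ht
    rcases ht.2.lt_or_eq with hlt | rfl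
    · have : ⌊t / τ⌋₊ = k := by
        rw [Nat.floor_eq_iff (div_nonneg (le_trans (by positivity) ht.1) hτ.le),
          le_div_iff₀ hτ, div_lt_iff₀ hτ]
        exact ⟨ht.1, by linarith⟩
      simp only [y, this]
    · have : ⌊(k * τ + τ) / τ⌋₊ = k + 1 := by
        rw [show (k * τ + τ) / τ = ((k + 1 : ℕ) : ℝ) by push_cast; field_simp]
        exact Nat.floor_natCast _
      simp only [y, piece, this, start, Function.iterate_succ_apply', Nat.cast_succ]
      rw [show (k * τ + τ) - (k + 1) * τ = 0 by ring, hsol0]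
      congr 1
      ring
  have hy_piece_zero : EqOn y (piece 0) (Icc (-τ) 0) := by
    intro t ht
    simp only [y, Nat.floor_of_nonpos (div_nonpos_of_nonpos_of_nonneg ht.2 hτ.le)]
  have hy0 : y 0 = w := by simp [y, piece, start, hsol0]
  refine ⟨y, hy0, fun t ht =>
    hasDerivAt_of_forall_hasDerivWithinAt_Icc_nat (g := fun t => F (y t)) hτ ?_ ?_ ht⟩
  · have h := (hpiece 0 0 (by simpa using hτ.le)).mono
      (by simpa using Icc_subset_Icc_right hτ.le)
    rw [← hy_piece_zero ⟨by linarith, le_rfl⟩] at h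
    exact h.congr hy_piece_zero (hy_piece_zero ⟨by linarith, le_rfl⟩)
  · intro k t ht
    rw [hy_piece k ht]
    exact ((hpiece k t ⟨by linarith [ht.1], ht.2⟩).mono
      (Icc_subset_Icc (by linarith) le_rfl)).congr (hy_piece k) (hy_piece k ht)

theorem LipschitzWith.exists_forall_mem_Icc_hasDerivWithinAt [CompleteSpace E] {K : ℝ≥0}
    (hF : LipschitzWith K F) (w : E) :
    ∃ z : ℝ → E, z 0 = w ∧ ∀ t ∈ Icc (-(K + 1 : ℝ)⁻¹) (K + 1)⁻¹,
      HasDerivWithinAt z (F (z t)) (Icc (-(K + 1 : ℝ)⁻¹) (K + 1)⁻¹) t := by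
  set a : ℝ≥0 := ‖F w‖₊ + 1
  have hbound : ∀ z ∈ closedBall w a, ‖F z‖ ≤ (K + 1) * a := by
    intro z hz
    have hz' : ‖z - w‖ ≤ a := mem_closedBall_iff_norm.1 hz
    have hFw : ‖F w‖ ≤ a := by simp [a]
    calc ‖F z‖ ≤ ‖F w‖ + ‖F z - F w‖ := norm_le_insert' _ _
      _ ≤ a + K * a := by
        gcongr
        exact (hF.norm_sub_le z w).trans (by gcongr)
      _ = (K + 1) * a := by ring
  have hpl : IsPicardLindelof (fun _ => F) (tmin := -(K + 1 : ℝ)⁻¹) (tmax := (K + 1)⁻¹)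
      ⟨0, neg_nonpos.2 (by positivity), by positivity⟩ w a 0 ((K + 1) * a) K :=
    IsPicardLindelof.of_time_independent hbound hF.lipschitzOnWith (by
      have : (K + 1 : ℝ) ≠ 0 := by positivity
      simp [field])
  exact hpl.exists_eq_forall_mem_Icc_hasDerivWithinAt₀

theorem LipschitzWith.exists_isForwardSolution [CompleteSpace E] {K : ℝ≥0}
    (hF : LipschitzWith K F) (w : E) : ∃ x : ℝ → E, x 0 = w ∧ IsForwardSolution F x :=
  exists_isForwardSolution_of_forall_exists_Icc (by positivity)
    hF.exists_forall_mem_Icc_hasDerivWithinAt w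

def attractionBasin (F : E → E) : Set E :=
  {w | ∀ x : ℝ → E, x 0 = w → IsForwardSolution F x → Tendsto x atTop (𝓝 0)}

theorem IsForwardSolution.tendsto_of_mem_attractionBasin (hx : IsForwardSolution F x) {T : ℝ}
    (hT : 0 ≤ T) (hxT : x T ∈ attractionBasin F) : Tendsto x atTop (𝓝 0) := by
  have h := (hxT _ (by simp) (hx.comp_const_add hT)).comp
    (tendsto_atTop_add_const_right atTop (-T) tendsto_id)
  simpa [Function.comp_def] using h

theorem LipschitzWith.mem_interior_attractionBasin {K : ℝ≥0} (hF : LipschitzWith K F)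
    (hx : IsForwardSolution F x) {T : ℝ} (hT : 0 ≤ T)
    (hxT : x T ∈ interior (attractionBasin F)) :
    x 0 ∈ interior (attractionBasin F) := by
  obtain ⟨ρ, hρ, hball⟩ := Metric.isOpen_iff.1 isOpen_interior _ hxT
  refine mem_interior.2 ⟨ball (x 0) (ρ / Real.exp (K * T)), fun w hw z hz0 hz => ?_,
    isOpen_ball, mem_ball_self (by positivity)⟩
  have hcont {y : ℝ → E} (hy : IsForwardSolution F y) : ContinuousOn y (Icc 0 T) :=
    fun t ht => (hy t ht.1).continuousAt.continuousWithinAt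
  have hdist := dist_le_of_trajectories_ODE (v := fun _ => F) (fun _ => hF) (hcont hz)
    (fun t ht => (hz t ht.1).hasDerivWithinAt) (hcont hx)
    (fun t ht => (hx t ht.1).hasDerivWithinAt) le_rfl T ⟨hT, le_rfl⟩
  have hzT : z T ∈ ball (x T) ρ := by
    rw [sub_zero, hz0] at hdist
    rw [mem_ball] at hw ⊢
    calc dist (z T) (x T) ≤ dist w (x 0) * Real.exp (K * T) := hdist
      _ < ρ := by rwa [← lt_div_iff₀ (by positivity)]
  exact hz.tendsto_of_mem_attractionBasin hT (interior_subset (hball hzT))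

end ForwardSolutions

section Gradient

variable {H : Type*} [NormedAddCommGroup H] [InnerProductSpace ℝ H] [CompleteSpace H]
  {L : H → ℝ}

theorem fderiv_apply_eq_inner_gradient (z v : H) :
    fderiv ℝ L z v = inner ℝ (gradient L z) v := by
  rw [← toDual_gradient, InnerProductSpace.toDual_apply_apply]

theorem LipschitzWith.norm_gradient_le {K : ℝ≥0} (hL : LipschitzWith K L) (z : H) :
    ‖gradient L z‖ ≤ K := by
  rw [← (InnerProductSpace.toDual ℝ H).norm_map, toDual_gradient]
  exact norm_fderiv_le_of_lipschitz ℝ hL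

end Gradient

section Euclidean

variable {n : ℕ} {L : EuclideanSpace ℝ (Fin n) → ℝ}

theorem mem_clarkeGradient_of_tendsto {ι : Type*} {l : Filter ι} [l.NeBot]
    {z : ι → EuclideanSpace ℝ (Fin n)} {q w : EuclideanSpace ℝ (Fin n)}
    (hz : Tendsto z l (𝓝 q)) (hdiff : ∀ i, DifferentiableAt ℝ L (z i))
    (hw : Tendsto (fun i => gradient L (z i)) l (𝓝 w)) :
    w ∈ ClarkeGradient L q := by
  refine subset_convexHull ℝ _ fun ε hε => ?_
  obtain ⟨i, hzi, hwi⟩ :=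
    ((hz.eventually (ball_mem_nhds q hε)).and (hw.eventually (ball_mem_nhds w hε))).exists
  rw [dist_comm, dist_eq_norm] at hzi hwi
  exact ⟨z i, hzi, hdiff i, hwi⟩

theorem IsCompact.exists_fderiv_le_neg_of_inner_clarkeGradient_neg
    {C : Set (EuclideanSpace ℝ (Fin n))} (hC : IsCompact C)
    {f : EuclideanSpace ℝ (Fin n) → EuclideanSpace ℝ (Fin n)} (hf : Continuous f)
    {K : ℝ≥0} (hL : LipschitzWith K L)
    (hneg : ∀ q ∈ C, ∀ y ∈ ClarkeGradient L q, inner ℝ (f q) y < 0) :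
    ∃ c > 0, ∃ r > 0, ∀ p ∈ C, ∀ z ∈ ball p r, DifferentiableAt ℝ L z →
      fderiv ℝ L z (f p) ≤ -c := by
  by_contra! h
  set u : ℕ → ℝ := fun k => 1 / ((k : ℝ) + 1)
  have hu : Tendsto u atTop (𝓝 0) := tendsto_one_div_add_atTop_nhds_zero_nat
  choose P hP Z hZ hdiff hlt using fun k => h (u k) (by positivity) (u k) (by positivity)
  obtain ⟨⟨q, w⟩, ⟨hq, -⟩, σ, hσ, hlim⟩ :=
    (hC.prod (isCompact_closedBall 0 K)).tendsto_subseq (x := fun k => (P k, gradient L (Z k)))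
    fun k => ⟨hP k, mem_closedBall_zero_iff.2 (hL.norm_gradient_le (Z k))⟩
  have hPq : Tendsto (P ∘ σ) atTop (𝓝 q) := (continuous_fst.tendsto _).comp hlim
  have hgw : Tendsto (fun k => gradient L (Z (σ k))) atTop (𝓝 w) :=
    (continuous_snd.tendsto _).comp hlim
  have hZq : Tendsto (Z ∘ σ) atTop (𝓝 q) := by
    refine hPq.congr_dist (squeeze_zero (fun _ => dist_nonneg) (fun k => ?_)
      (hu.comp hσ.tendsto_atTop))
    exact (dist_comm _ _).trans_le (hZ (σ k)).le
  have hw : w ∈ ClarkeGradient L q := mem_clarkeGradient_of_tendsto hZq (fun k => hdiff _) hgw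
  have hinner : Tendsto (fun k => fderiv ℝ L (Z (σ k)) (f (P (σ k)))) atTop
      (𝓝 (inner ℝ w (f q))) := by
    simpa only [fderiv_apply_eq_inner_gradient, Function.comp_def] using
      hgw.inner ((hf.tendsto q).comp hPq)
  have hnonneg : 0 ≤ inner ℝ w (f q) :=
    le_of_tendsto_of_tendsto' (by simpa using (hu.comp hσ.tendsto_atTop).neg) hinner
      fun k => (hlt (σ k)).le
  exact (hneg q hq w hw).not_ge (real_inner_comm w (f q) ▸ hnonneg)

theorem exists_mem_thickening_of_inner_clarkeGradient_neg
    {X Xs : Set (EuclideanSpace ℝ (Fin n))} (hX : IsCompact X)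
    {f : EuclideanSpace ℝ (Fin n) → EuclideanSpace ℝ (Fin n)} (hf : Continuous f)
    {K : ℝ≥0} (hL : LipschitzWith K L) {α : ℝ} (hlev : X = {x | L x ≤ α})
    (hdec : ∀ x ∈ X \ Xs, ∀ y ∈ ClarkeGradient L x, inner ℝ (f x) y < 0)
    {ε : ℝ} (hε : 0 < ε) {x : ℝ → EuclideanSpace ℝ (Fin n)} (hx0 : x 0 ∈ X)
    (hx : IsForwardSolution f x) : ∃ T ≥ 0, x T ∈ thickening ε Xs := by
  obtain ⟨c, hc, r, hr, hdesc⟩ :=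
    (hX.diff isOpen_thickening).exists_fderiv_le_neg_of_inner_clarkeGradient_neg hf hL
      fun q hq => hdec q ⟨hq.1, fun h => hq.2 (self_subset_thickening hε _ h)⟩
  obtain ⟨m, hm⟩ := hX.bddBelow_image hL.continuous.continuousOn
  have hmemX {t : ℝ} (ht : L (x t) ≤ L (x 0)) : x t ∈ X := by
    rw [hlev] at hx0 ⊢
    exact ht.trans hx0
  by_contra! hfar
  have hdescent {T : ℝ} (hT : 0 ≤ T) : L (x T) ≤ L (x 0) - c / 2 * (T - 0) := by
    refine le_sub_mul_of_forall_eventually_le (g := fun t => L (x t)) hT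
      (fun t ht => (hL.continuous.continuousAt.comp (hx t ht.1).continuousAt).continuousWithinAt)
      fun t ht hLt => hL.eventually_le_sub_mul_of_hasDerivAt (hx t ht.1) ?_ (half_lt_self hc)
    have hxt : x t ∈ X \ thickening ε Xs :=
      ⟨hmemX (hLt.trans (by nlinarith [ht.1])), hfar t ht.1⟩
    filter_upwards [Ioo_mem_nhdsGT (by positivity : 0 < r / (‖f (x t)‖ + 1))] with h hh
    refine hL.le_sub_mul_of_fderiv_le (hdesc _ hxt) hh.1.le ?_
    have := (lt_div_iff₀ (by positivity)).1 hh.2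
    nlinarith [hh.1, norm_nonneg (f (x t))]
  have hm0 : m ≤ L (x 0) := hm ⟨x 0, hx0, rfl⟩
  have hT : 0 ≤ 2 * (L (x 0) - m + 1) / c := by positivity
  have hLT := hdescent hT
  have hmT := hm ⟨_, hmemX (hLT.trans (by nlinarith)), rfl⟩
  have hcT : c / 2 * (2 * (L (x 0) - m + 1) / c) = L (x 0) - m + 1 := by field_simp
  simp only [sub_zero, hcT] at hLT
  linarith

theorem StabilityPrior.subset_interior_attractionBasin
    {F : EuclideanSpace ℝ (Fin n) → EuclideanSpace ℝ (Fin n)}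
    {Xs : Set (EuclideanSpace ℝ (Fin n))} (hprior : StabilityPrior F Xs) {K : ℝ≥0}
    (hF : LipschitzWith K F) :
    Xs ⊆ interior (attractionBasin F) := by
  obtain ⟨-, ⟨δ, hδ, hball⟩, hconv⟩ := hprior
  have hzero : interior (attractionBasin F) ∈ 𝓝 0 := by
    refine isOpen_interior.mem_nhds (interior_maximal (fun w hw x hx0 hx => ?_) isOpen_ball
      (mem_ball_self hδ))
    exact hball x (by rwa [hx0, ← dist_zero_right]) hx
  intro p hp
  obtain ⟨y, rfl, hy⟩ := hF.exists_isForwardSolution p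
  obtain ⟨T, hyT, hT⟩ :=
    ((hconv y hp hy).eventually hzero |>.and (eventually_ge_atTop 0)).exists
  exact hF.mem_interior_attractionBasin hy hT hyT

end Euclidean

theorem lyapunov_inference_general {n : ℕ}
    (X Xs : Set (EuclideanSpace ℝ (Fin n)))
    (hX : IsCompact X) (hXs : IsCompact Xs)
    (f : EuclideanSpace ℝ (Fin n) → EuclideanSpace ℝ (Fin n))
    (hf : ∃ K : NNReal, LipschitzWith K f)
    (hprior : StabilityPrior f Xs)
    (L : EuclideanSpace ℝ (Fin n) → ℝ)
    (hL : ∃ K : NNReal, LipschitzWith K L)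
    (α : ℝ) (hlev : X = {x | L x ≤ α})
    (hdec : ∀ x ∈ X \ Xs, ∀ y ∈ ClarkeGradient L x, (inner ℝ (f x) y : ℝ) < 0) :
    ∀ x₀ ∈ interior X, ∀ x : ℝ → EuclideanSpace ℝ (Fin n),
      IsSolution f x₀ x → Tendsto x atTop (nhds 0) := by
  rintro x₀ hx₀ x ⟨rfl, hx : IsForwardSolution f x⟩
  obtain ⟨Kf, hf⟩ := hf
  obtain ⟨Kl, hL⟩ := hL
  obtain ⟨ε, hε, hbasin⟩ := hXs.exists_thickening_subset_open isOpen_interior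
    (hprior.subset_interior_attractionBasin hf)
  obtain ⟨T, hT, hxT⟩ := exists_mem_thickening_of_inner_clarkeGradient_neg hX hf.continuous hL
    hlev hdec hε (interior_subset hx₀) hx
  exact hx.tendsto_of_mem_attractionBasin hT (interior_subset (hbasin hxT))

/-- Lyapunov inference, Theorem 1. -/
theorem lyapunov_inference {n : ℕ}
    (X Xs : Set (EuclideanSpace ℝ (Fin n)))
    (hX : IsCompact X) (hXs : IsCompact Xs) (hXsX : Xs ⊆ X) (h0 : (0 : EuclideanSpace ℝ (Fin n)) ∈ Xs)
    (f : EuclideanSpace ℝ (Fin n) → EuclideanSpace ℝ (Fin n))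
    (hf : ∃ K : NNReal, LipschitzWith K f)
    (hprior : StabilityPrior f Xs)
    (L : EuclideanSpace ℝ (Fin n) → ℝ)
    (hL : ∃ K : NNReal, LipschitzWith K L)
    (α : ℝ) (hlev : X = {x | L x ≤ α})
    (hdec : ∀ x ∈ X \ Xs, ∀ y ∈ ClarkeGradient L x, (inner ℝ (f x) y : ℝ) < 0) :
    ∀ x₀ ∈ interior X, ∀ x : ℝ → EuclideanSpace ℝ (Fin n),
      IsSolution f x₀ x → Tendsto x atTop (nhds 0) :=
  lyapunov_inference_general X Xs hX hXs f hf hprior L hL α hlev hdec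
end

section
/- Let M ≥ 0, x_1,…,x_N ∈ ℝ^n, f_1,…,f_N ∈ ℝ^n, let V ⊆ ℝ^n be a finite set and C = conv(V), and let g ∈ ℝ^n. Suppose there exist g̃_1,…,g̃_N ∈ ℝ^n with Σ_{i=1}^N g̃_i = g such that for every v ∈ V: Σ_{i=1}^N (⟨g̃_i, f_i⟩ + ‖g̃_i‖·M·‖v − x_i‖) < 0. Then for every f : ℝ^n → ℝ^n satisfying ‖f(x) − f(y)‖ ≤ M‖x − y‖ for all x, y and f(x_i) = f_i for all i = 1,…,N, and for every x ∈ C, one has ⟨g, f(x)⟩ < 0. -/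
/-!
Write `gᵢ` for `gtil i`. For `x` in the hull, `⟪g, f x⟫ = ∑ᵢ ⟪gᵢ, fᵢ⟫ + ⟪gᵢ, f x - f xᵢ⟫`, and
Cauchy–Schwarz with the Lipschitz bound gives `⟪g, f x⟫ ≤ φ x`, where
`φ y = ∑ᵢ (⟪gᵢ, fᵢ⟫ + ‖gᵢ‖ M ‖y - xᵢ‖)` is `robustBound`. Since `M ≥ 0`, `φ` is convex, so by the maximum
principle its maximum on `conv V` is attained at a vertex, where it is negative by hypothesis.
-/

open Finset

theorem ConvexOn.finset_sum {𝕜 E β ι : Type*} [Semiring 𝕜] [PartialOrder 𝕜] [AddCommMonoid E]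
    [AddCommMonoid β] [PartialOrder β] [IsOrderedAddMonoid β] [SMul 𝕜 E] [Module 𝕜 β]
    [PosSMulMono 𝕜 β] {s : Set E} (hs : Convex 𝕜 s) (t : Finset ι) {f : ι → E → β}
    (hf : ∀ i ∈ t, ConvexOn 𝕜 s (f i)) : ConvexOn 𝕜 s fun x => ∑ i ∈ t, f i x := by
  classical
  induction t using Finset.induction_on with
  | empty => simpa using convexOn_const (0 : β) hs
  | insert a t ha ih =>
    simp only [sum_insert ha]
    exact (hf a (mem_insert_self a t)).add (ih fun i hi => hf i (mem_insert_of_mem hi))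

section RobustBound

variable {ι E F : Type*} [Fintype ι] [SeminormedAddCommGroup E]
  [NormedAddCommGroup F] [InnerProductSpace ℝ F]

theorem inner_le_inner_add_of_lipschitz {M : ℝ} {f : E → F}
    (hf : ∀ x y, ‖f x - f y‖ ≤ M * ‖x - y‖) (g : F) (x p : E) :
    inner ℝ g (f x) ≤ inner ℝ g (f p) + ‖g‖ * M * ‖x - p‖ := by
  have hsplit : inner ℝ g (f x) = inner ℝ g (f p) + inner ℝ g (f x - f p) := by
    rw [inner_sub_right]; ring
  rw [hsplit, mul_assoc]
  gcongr
  calc inner ℝ g (f x - f p) ≤ ‖g‖ * ‖f x - f p‖ := real_inner_le_norm _ _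
    _ ≤ ‖g‖ * (M * ‖x - p‖) := by gcongr; exact hf x p

noncomputable def robustBound (M : ℝ) (g : ι → F) (xd : ι → E) (fd : ι → F) (y : E) : ℝ :=
  ∑ i, (inner ℝ (g i) (fd i) + ‖g i‖ * M * ‖y - xd i‖)

theorem inner_sum_le_robustBound {M : ℝ} {f : E → F} (hf : ∀ x y, ‖f x - f y‖ ≤ M * ‖x - y‖)
    (g : ι → F) (xd : ι → E) (fd : ι → F) (hfd : ∀ i, f (xd i) = fd i) (x : E) :
    inner ℝ (∑ i, g i) (f x) ≤ robustBound M g xd fd x := by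
  rw [sum_inner]
  refine sum_le_sum fun i _ => ?_
  simpa only [hfd i] using inner_le_inner_add_of_lipschitz hf (g i) x (xd i)

theorem convexOn_robustBound [NormedSpace ℝ E] {M : ℝ} (hM : 0 ≤ M) (g : ι → F) (xd : ι → E) (fd : ι → F) :
    ConvexOn ℝ Set.univ (robustBound M g xd fd) :=
  ConvexOn.finset_sum convex_univ univ fun i _ => by
    simpa only [dist_eq_norm, smul_eq_mul, Pi.add_def] using (convexOn_const (inner ℝ (g i) (fd i))
      convex_univ).add ((convexOn_univ_dist (xd i)).smul (mul_nonneg (norm_nonneg (g i)) hM))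

end RobustBound

/-- tractable robust Lyapunov condition for Lipschitz dynamics,
Corollary 1. -/
theorem robust_lyapunov_condition_lipschitz {n N : ℕ}
    (M : ℝ) (hM : 0 ≤ M)
    (xd fd : Fin N → EuclideanSpace ℝ (Fin n))
    (V : Finset (EuclideanSpace ℝ (Fin n)))
    (C : Set (EuclideanSpace ℝ (Fin n)))
    (hC : C = convexHull ℝ (V : Set (EuclideanSpace ℝ (Fin n))))
    (g : EuclideanSpace ℝ (Fin n))
    (gtil : Fin N → EuclideanSpace ℝ (Fin n)) (hsum : ∑ i, gtil i = g)
    (hneg : ∀ v ∈ V, ∑ i, ((inner ℝ (gtil i) (fd i) : ℝ) + ‖gtil i‖ * M * ‖v - xd i‖) < 0) :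
    ∀ f : EuclideanSpace ℝ (Fin n) → EuclideanSpace ℝ (Fin n),
      (∀ x y, ‖f x - f y‖ ≤ M * ‖x - y‖) → (∀ i, f (xd i) = fd i) →
      ∀ x ∈ C, (inner ℝ g (f x) : ℝ) < 0 := by
  intro f hf hfd x hx
  subst hC hsum
  obtain ⟨v, hv, hxv⟩ := (convexOn_robustBound hM gtil xd fd).exists_ge_of_mem_convexHull
    (Set.subset_univ _) hx
  calc inner ℝ (∑ i, gtil i) (f x) ≤ robustBound M gtil xd fd x :=
        inner_sum_le_robustBound hf gtil xd fd hfd x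
    _ ≤ robustBound M gtil xd fd v := hxv
    _ < 0 := hneg v hv
end

section
/- Let X ⊆ ℝ^n be a compact polytope, X_s ⊆ X compact with 0 ∈ X_s, D = {(x_i, f_i)}_{i=1}^{N_D} ⊆ ℝ^n × ℝ^n a dataset, M ≥ 0, ε > 0. Let {C_k = conv(V_k)}_{k=1}^{N_C} be a tessellation of X and g_k ∈ ℝ^n, b_k ∈ ℝ parameters whose affine pieces agree on overlaps (for all k, ℓ and all x ∈ C_k ∩ C_ℓ, ⟨g_k, x⟩ + b_k = ⟨g_ℓ, x⟩ + b_ℓ), defining a continuous function L : X → ℝ by L(x) = ⟨g_k, x⟩ + b_k for x ∈ C_k. Suppose that for every k with C_k ∩ (X \ X_s) ≠ ∅ there exist g̃_{1,k},…,g̃_{N_D,k} ∈ ℝ^n with Σ_{i=1}^{N_D} g̃_{i,k} = g_k and, for every vertex v ∈ V_k, Σ_{i=1}^{N_D} (⟨g̃_{i,k}, f_i⟩ + ‖g̃_{i,k}‖·M·‖v − x_i‖) ≤ −ε. Let β ∈ ℝ be such that the sublevel set S := {x ∈ X : L(x) ≤ β} satisfies X_s ⊆ S and S ∩ ∂X =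 ∅. Then for every h : ℝ^n → ℝ^n satisfying ‖h(x) − h(y)‖ ≤ M‖x − y‖ for all x, y, h(x_i) = f_i for all i, and the stability prior with respect to X_s, every solution of x' = h(x) with initial condition in the interior of S converges to 0 as t → ∞. -/
/-!
Away from `Xs`, on a cell `C k = conv (V k)` the bound `⟪g̃ᵢ, h y⟫ ≤ ⟪g̃ᵢ, fᵢ⟫ + ‖g̃ᵢ‖ M ‖y - xᵢ‖`
(Lipschitz continuity and `h xᵢ = fᵢ`) has a right-hand side convex in `y`, so the vertex
condition gives `⟪g k, h y⟫ ≤ -ε` on the whole cell: `L` decreases at rate `ε` along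
trajectories. As `S` avoids `∂X`, a trajectory starting in `S` cannot leave `S` before reaching
`Xs`, and as `L` is bounded below on the compact `X`, it reaches `Xs` in finite time; from there
the stability prior applies.
-/

open Filter Metric

/-- A set is a polytope: a finite union of convex hulls of finite sets. -/
def IsPolytope {n : ℕ} (X : Set (EuclideanSpace ℝ (Fin n))) : Prop :=
  ∃ (m : ℕ) (W : Fin m → Finset (EuclideanSpace ℝ (Fin n))),
    X = ⋃ i, convexHull ℝ (W i : Set (EuclideanSpace ℝ (Fin n)))

open Set

section RobustDecrease

variable {E : Type*} [NormedAddCommGroup E] [InnerProductSpace ℝ E] {ι : Type*} [Fintype ι]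

lemma convexOn_sum_inner_add_mul_norm_sub {M : ℝ} (hM : 0 ≤ M) (gt fd xd : ι → E) :
    ConvexOn ℝ univ fun y => ∑ i, ((inner ℝ (gt i) (fd i) : ℝ) + ‖gt i‖ * M * ‖y - xd i‖) := by
  have hterm : ∀ i, ConvexOn ℝ univ
      fun y : E => (inner ℝ (gt i) (fd i) : ℝ) + ‖gt i‖ * M * ‖y - xd i‖ := fun i => by
    refine (convexOn_const _ convex_univ).add ?_
    simpa [dist_eq_norm] using
      (convexOn_dist (xd i) convex_univ).smul (mul_nonneg (norm_nonneg (gt i)) hM)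
  simpa only [Finset.sum_fn] using
    Finset.sum_induction _ (ConvexOn ℝ univ) (fun _ _ => ConvexOn.add)
      (convexOn_const 0 convex_univ) fun i _ => hterm i

lemma inner_sum_le_sum_inner_add_mul_norm_sub {M : ℝ} {F : E → E}
    (hF : ∀ x y, ‖F x - F y‖ ≤ M * ‖x - y‖) {fd xd : ι → E} (hdata : ∀ i, F (xd i) = fd i)
    (gt : ι → E) (y : E) :
    (inner ℝ (∑ i, gt i) (F y) : ℝ) ≤
      ∑ i, ((inner ℝ (gt i) (fd i) : ℝ) + ‖gt i‖ * M * ‖y - xd i‖) := by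
  rw [sum_inner]
  refine Finset.sum_le_sum fun i _ => ?_
  calc (inner ℝ (gt i) (F y) : ℝ)
      = inner ℝ (gt i) (fd i) + inner ℝ (gt i) (F y - F (xd i)) := by
        rw [inner_sub_right, hdata]; ring
    _ ≤ inner ℝ (gt i) (fd i) + ‖gt i‖ * (M * ‖y - xd i‖) := by
        gcongr
        exact (real_inner_le_norm _ _).trans
          (mul_le_mul_of_nonneg_left (hF _ _) (norm_nonneg _))
    _ = _ := by ring

lemma inner_le_of_mem_convexHull {M ε : ℝ} (hM : 0 ≤ M) {F : E → E}
    (hF : ∀ x y, ‖F x - F y‖ ≤ M * ‖x - y‖) {fd xd : ι → E} (hdata : ∀ i, F (xd i) = fd i)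
    {V : Set E} {gt : ι → E}
    (hV : ∀ v ∈ V, ∑ i, ((inner ℝ (gt i) (fd i) : ℝ) + ‖gt i‖ * M * ‖v - xd i‖) ≤ -ε)
    {y : E} (hy : y ∈ convexHull ℝ V) :
    (inner ℝ (∑ i, gt i) (F y) : ℝ) ≤ -ε := by
  obtain ⟨v, hv, hyv⟩ :=
    (convexOn_sum_inner_add_mul_norm_sub hM gt fd xd).exists_ge_of_mem_convexHull
      (subset_univ V) hy
  exact (inner_sum_le_sum_inner_add_mul_norm_sub hF hdata gt y).trans (hyv.trans (hV v hv))

end RobustDecrease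

section PiecewiseAffineLyapunov

open Topology

variable {E : Type*} [NormedAddCommGroup E] [InnerProductSpace ℝ E] {ι : Type*} [Finite ι]
  {C : ι → Set E} {g : ι → E} {b : ι → ℝ} {L : E → ℝ} {X Xs : Set E} {F : E → E}
  {x : ℝ → E} {β ε : ℝ}

lemma continuousOn_iUnion_of_eqOn_affine (hC : ∀ k, IsClosed (C k))
    (hL : ∀ k, ∀ y ∈ C k, L y = inner ℝ (g k) y + b k) : ContinuousOn L (⋃ k, C k) :=
  (locallyFinite_of_finite C).continuousOn_iUnion hC fun k =>
    ((continuous_const.inner continuous_id).add continuous_const).continuousOn.congr (hL k)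

lemma eventually_le_sub_mul_of_hasDerivAt (hC : ∀ k, IsClosed (C k))
    (hL : ∀ k, ∀ y ∈ C k, L y = inner ℝ (g k) y + b k) {v : E} {t μ : ℝ}
    (hx : HasDerivAt x v t) (hcov : ∀ᶠ z in 𝓝[>] t, x z ∈ ⋃ k, C k)
    (hslope : ∀ k, x t ∈ C k → (inner ℝ (g k) v : ℝ) < -μ) :
    ∀ᶠ z in 𝓝[>] t, L (x z) ≤ L (x t) - μ * (z - t) := by
  have hcell : ∀ k, ∀ᶠ z in 𝓝[>] t, x z ∈ C k → L (x z) ≤ L (x t) - μ * (z - t) := by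
    intro k
    by_cases hk : x t ∈ C k
    · have hderiv : HasDerivAt (fun s => (inner ℝ (g k) (x s) : ℝ)) (inner ℝ (g k) v) t :=
        (innerSL ℝ (g k)).hasFDerivAt.comp_hasDerivAt t hx
      filter_upwards [(hderiv.hasDerivWithinAt (s := Ioi t)).limsup_slope_le'
        (lt_irrefl t) (hslope k hk), self_mem_nhdsWithin] with z hz (hzt : t < z) hxz
      rw [slope_def_field, div_lt_iff₀ (sub_pos.2 hzt)] at hz
      rw [hL k _ hxz, hL k _ hk]
      linarith
    · filter_upwards [nhdsWithin_le_nhds <|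
        hx.continuousAt.preimage_mem_nhds ((hC k).isOpen_compl.mem_nhds hk)] with z hz hxz
      exact absurd hxz hz
  filter_upwards [hcov, eventually_all.2 hcell] with z hz hzcell
  obtain ⟨k, hk⟩ := mem_iUnion.1 hz
  exact hzcell k hk


lemma forall_mem_and_le_of_forall_notMem (hε : 0 < ε) (hC : ∀ k, IsClosed (C k))
    (hL : ∀ k, ∀ y ∈ C k, L y = inner ℝ (g k) y + b k) (hX : IsClosed X)
    (hcover : X ⊆ ⋃ k, C k) (hint : ∀ y ∈ X, L y ≤ β → y ∈ interior X)
    (hdec : ∀ y ∈ X, L y ≤ β → y ∉ Xs → ∀ k, y ∈ C k → (inner ℝ (g k) (F y) : ℝ) ≤ -ε)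
    (hx : ∀ t, 0 ≤ t → HasDerivAt x (F (x t)) t) (hx0 : x 0 ∈ X) (hβ : L (x 0) ≤ β)
    (hXs : ∀ t, 0 ≤ t → x t ∉ Xs) :
    ∀ t, 0 ≤ t → x t ∈ X ∧ L (x t) ≤ L (x 0) - ε / 2 * t := by
  intro c hc
  set s := {t ∈ Icc 0 c ∩ x ⁻¹' X | L (x t) ≤ L (x 0) - ε / 2 * t}
  have hxc : ContinuousOn x (Icc 0 c) := fun t ht => (hx t ht.1).continuousAt.continuousWithinAt
  have hclosed : IsClosed (s ∩ Icc 0 c) := by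
    have hA : IsClosed (Icc 0 c ∩ x ⁻¹' X) := hxc.preimage_isClosed_of_isClosed isClosed_Icc hX
    rw [inter_eq_left.2 fun t ht => ht.1.1]
    exact hA.isClosed_le ((continuousOn_iUnion_of_eqOn_affine hC hL).comp
      (hxc.mono inter_subset_left) fun t ht => hcover ht.2) (by fun_prop)
  -- A time in `s` puts the trajectory in the sublevel set, hence in `interior X`, where `L`
  -- keeps decreasing: this lets `s` grow to the right (real induction on `[0, c]`).
  have hstep : ∀ t ∈ s ∩ Ico 0 c, s ∈ 𝓝[>] t := by
    rintro t ⟨⟨⟨⟨ht0, -⟩, hxt⟩, hLt⟩, -, htc⟩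
    have hLtβ : L (x t) ≤ β := by nlinarith
    have hxint : ∀ᶠ z in 𝓝[>] t, x z ∈ interior X := nhdsWithin_le_nhds <|
      (hx t ht0).continuousAt.preimage_mem_nhds (isOpen_interior.mem_nhds (hint _ hxt hLtβ))
    have hdrop := eventually_le_sub_mul_of_hasDerivAt hC hL (hx t ht0) (μ := ε / 2)
      (hxint.mono fun z hz => hcover (interior_subset hz))
      fun k hk => (hdec _ hxt hLtβ (hXs t ht0) k hk).trans_lt (by linarith)
    filter_upwards [hxint, hdrop, Ioo_mem_nhdsGT htc] with z hXz hLz hz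
    exact ⟨⟨⟨ht0.trans hz.1.le, hz.2.le⟩, interior_subset (s := X) hXz⟩, by linarith⟩
  have hc' := hclosed.Icc_subset_of_forall_mem_nhdsWithin ⟨⟨⟨le_rfl, hc⟩, hx0⟩, by simp⟩ hstep
    ⟨hc, le_rfl⟩
  exact ⟨hc'.1.2, hc'.2⟩

lemma exists_nonneg_mem_of_lyapunov (hε : 0 < ε) (hC : ∀ k, IsClosed (C k))
    (hL : ∀ k, ∀ y ∈ C k, L y = inner ℝ (g k) y + b k) (hX : IsCompact X)
    (hcover : X ⊆ ⋃ k, C k) (hint : ∀ y ∈ X, L y ≤ β → y ∈ interior X)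
    (hdec : ∀ y ∈ X, L y ≤ β → y ∉ Xs → ∀ k, y ∈ C k → (inner ℝ (g k) (F y) : ℝ) ≤ -ε)
    (hx : ∀ t, 0 ≤ t → HasDerivAt x (F (x t)) t) (hx0 : x 0 ∈ X) (hβ : L (x 0) ≤ β) :
    ∃ T, 0 ≤ T ∧ x T ∈ Xs := by
  by_contra! hXs
  have hbound := forall_mem_and_le_of_forall_notMem hε hC hL hX.isClosed hcover hint hdec hx hx0
    hβ hXs
  obtain ⟨m, hm⟩ := hX.bddBelow_image ((continuousOn_iUnion_of_eqOn_affine hC hL).mono hcover)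
  have hm0 : m ≤ L (x 0) := hm (mem_image_of_mem L hx0)
  set T := 2 * (L (x 0) - m) / ε + 1 with hT_def
  have hT : 0 ≤ T := by have := sub_nonneg.2 hm0; positivity
  have hmT : m ≤ L (x T) := hm (mem_image_of_mem L (hbound T hT).1)
  have hεT : ε / 2 * T = L (x 0) - m + ε / 2 := by rw [hT_def]; field_simp
  linarith [(hbound T hT).2]

end PiecewiseAffineLyapunov

theorem sublevel_set_roa_general {n Nd Nc : ℕ}
    (X Xs : Set (EuclideanSpace ℝ (Fin n)))
    (hXcomp : IsCompact X)
    -- the dataset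
    (xd fd : Fin Nd → EuclideanSpace ℝ (Fin n))
    (M ε : ℝ) (hM : 0 ≤ M) (hε : 0 < ε)
    -- the tessellation `{C k = conv (V k)}` of `X`
    (V : Fin Nc → Finset (EuclideanSpace ℝ (Fin n)))
    (C : Fin Nc → Set (EuclideanSpace ℝ (Fin n)))
    (hCk : ∀ k, C k = convexHull ℝ (V k : Set (EuclideanSpace ℝ (Fin n))))
    (hcover : (⋃ k, C k) = X)
    -- the PWA data, agreeing on overlaps, defining a continuous `L` on `X`
    (g : Fin Nc → EuclideanSpace ℝ (Fin n)) (b : Fin Nc → ℝ)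
    (L : EuclideanSpace ℝ (Fin n) → ℝ)
    (hLin : ∀ k, ∀ x ∈ C k, L x = (inner ℝ (g k) x : ℝ) + b k)
    -- robust decrease condition
    (hdec : ∀ k, (C k ∩ (X \ Xs)).Nonempty →
      ∃ gtil : Fin Nd → EuclideanSpace ℝ (Fin n), (∑ i, gtil i = g k) ∧
        ∀ v ∈ V k, ∑ i, ((inner ℝ (gtil i) (fd i) : ℝ) + ‖gtil i‖ * M * ‖v - xd i‖) ≤ -ε)
    -- the sublevel set
    (β : ℝ) (S : Set (EuclideanSpace ℝ (Fin n))) (hS : S = {x ∈ X | L x ≤ β})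
    (hSbdy : S ∩ frontier X = ∅) :
    ∀ h : EuclideanSpace ℝ (Fin n) → EuclideanSpace ℝ (Fin n),
      (∀ x y, ‖h x - h y‖ ≤ M * ‖x - y‖) → (∀ i, h (xd i) = fd i) →
      StabilityPrior h Xs →
      ∀ x₀ ∈ interior S, ∀ x : ℝ → EuclideanSpace ℝ (Fin n),
        IsSolution h x₀ x → Tendsto x atTop (nhds 0) := by
  intro h hlip hdata hprior x₀ hx₀ x ⟨hx0, hx'⟩
  have hC : ∀ k, IsClosed (C k) := fun k =>
    hCk k ▸ ((V k).finite_toSet.isCompact_convexHull ℝ).isClosed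
  have hx₀S : x 0 ∈ S := hx0 ▸ interior_subset hx₀
  rw [hS] at hx₀S hSbdy
  have hint : ∀ y ∈ X, L y ≤ β → y ∈ interior X := fun y hyX hyβ => by
    by_contra hy
    exact Set.eq_empty_iff_forall_notMem.1 hSbdy y
      ⟨⟨hyX, hyβ⟩, hXcomp.isClosed.frontier_eq ▸ ⟨hyX, hy⟩⟩
  have hdecrease : ∀ y ∈ X, L y ≤ β → y ∉ Xs → ∀ k, y ∈ C k →
      (inner ℝ (g k) (h y) : ℝ) ≤ -ε := by
    intro y hyX _ hyXs k hyk
    obtain ⟨gt, hsum, hV⟩ := hdec k ⟨y, hyk, hyX, hyXs⟩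
    exact hsum ▸ inner_le_of_mem_convexHull hM hlip hdata hV (hCk k ▸ hyk)
  obtain ⟨T, hT, hxT⟩ := exists_nonneg_mem_of_lyapunov hε hC hLin hXcomp hcover.ge hint
    hdecrease hx' hx₀S.1 hx₀S.2
  have hshift : Tendsto (fun t => x (t + T)) atTop (nhds 0) :=
    hprior.2.2 _ (by simpa using hxT) fun t ht => (hx' _ (by linarith)).comp_add_const t T
  simpa [Function.comp_def] using
    hshift.comp (tendsto_atTop_add_const_right atTop (-T) tendsto_id)

/-- region of attraction via sublevel sets of the learnt PWA function,
Corollary 4. -/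
theorem sublevel_set_roa {n Nd Nc : ℕ}
    (X Xs : Set (EuclideanSpace ℝ (Fin n)))
    (hXcomp : IsCompact X) (hXpoly : IsPolytope X)
    (hXs : IsCompact Xs) (hXsX : Xs ⊆ X) (h0 : (0 : EuclideanSpace ℝ (Fin n)) ∈ Xs)
    -- the dataset
    (xd fd : Fin Nd → EuclideanSpace ℝ (Fin n))
    (M ε : ℝ) (hM : 0 ≤ M) (hε : 0 < ε)
    -- the tessellation `{C k = conv (V k)}` of `X`
    (V : Fin Nc → Finset (EuclideanSpace ℝ (Fin n)))
    (C : Fin Nc → Set (EuclideanSpace ℝ (Fin n)))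
    (hCk : ∀ k, C k = convexHull ℝ (V k : Set (EuclideanSpace ℝ (Fin n))))
    (hcover : (⋃ k, C k) = X)
    (hdisj : ∀ k l, k ≠ l → interior (C k) ∩ interior (C l) = ∅)
    -- the PWA data, agreeing on overlaps, defining a continuous `L` on `X`
    (g : Fin Nc → EuclideanSpace ℝ (Fin n)) (b : Fin Nc → ℝ)
    (hagree : ∀ k l, ∀ x ∈ C k ∩ C l, (inner ℝ (g k) x : ℝ) + b k = (inner ℝ (g l) x : ℝ) + b l)
    (L : EuclideanSpace ℝ (Fin n) → ℝ)
    (hLin : ∀ k, ∀ x ∈ C k, L x = (inner ℝ (g k) x : ℝ) + b k)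
    -- robust decrease condition
    (hdec : ∀ k, (C k ∩ (X \ Xs)).Nonempty →
      ∃ gtil : Fin Nd → EuclideanSpace ℝ (Fin n), (∑ i, gtil i = g k) ∧
        ∀ v ∈ V k, ∑ i, ((inner ℝ (gtil i) (fd i) : ℝ) + ‖gtil i‖ * M * ‖v - xd i‖) ≤ -ε)
    -- the sublevel set
    (β : ℝ) (S : Set (EuclideanSpace ℝ (Fin n))) (hS : S = {x ∈ X | L x ≤ β})
    (hXsS : Xs ⊆ S) (hSbdy : S ∩ frontier X = ∅) :
    ∀ h : EuclideanSpace ℝ (Fin n) → EuclideanSpace ℝ (Fin n),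
      (∀ x y, ‖h x - h y‖ ≤ M * ‖x - y‖) → (∀ i, h (xd i) = fd i) →
      StabilityPrior h Xs →
      ∀ x₀ ∈ interior S, ∀ x : ℝ → EuclideanSpace ℝ (Fin n),
        IsSolution h x₀ x → Tendsto x atTop (nhds 0) :=
  sublevel_set_roa_general X Xs hXcomp xd fd M ε hM hε V C hCk hcover g b L hLin hdec β S hS hSbdy
end

section
/- Let f : ℝ² → ℝ² be the counterexample vector field. Then for every x = (x₁, x₂) ∈ ℝ² with ‖x‖ ≥ 3/4, one has ⟨f(x), sgn(‖x‖ − 1)·x⟩ = −‖x‖·|1 − ‖x‖|; in particular, this quantity is strictly negative whenever ‖x‖ ≥ 3/4 and ‖x‖ ≠ 1. -/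
/-- The vector `(a, b)` in Euclidean `ℝ²`. -/
noncomputable def vec2 (a b : ℝ) : EuclideanSpace ℝ (Fin 2) :=
  (WithLp.equiv 2 (Fin 2 → ℝ)).symm ![a, b]

/-- The radial speed of the counterexample vector field. -/
noncomputable def radialSpeed (x : EuclideanSpace ℝ (Fin 2)) : ℝ :=
  if 3/4 ≤ ‖x‖ then 1/‖x‖ - 1
  else if 1/4 ≤ ‖x‖ then 1 - 1/(2*‖x‖)
  else -1

/-- The counterexample vector field
`f(x) = ‖x‖·‖x − (1,0)‖²·(−x₂, x₁) + v_r(x)·x`. -/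
noncomputable def counterF (x : EuclideanSpace ℝ (Fin 2)) : EuclideanSpace ℝ (Fin 2) :=
  (‖x‖ * ‖x - vec2 1 0‖^2) • vec2 (-(x 1)) (x 0) + radialSpeed x • x


theorem Real.sign_mul_self (r : ℝ) : Real.sign r * r = |r| := by
  rcases lt_trichotomy r 0 with hr | rfl | hr
  · rw [Real.sign_of_neg hr, abs_of_neg hr, neg_one_mul]
  · simp
  · rw [Real.sign_of_pos hr, abs_of_pos hr, one_mul]

theorem inner_vec2_rotation_self (x : EuclideanSpace ℝ (Fin 2)) :
    inner ℝ (vec2 (-(x 1)) (x 0)) x = 0 := by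
  simp only [vec2, PiLp.inner_apply, Fin.sum_univ_two, WithLp.equiv_symm_apply,
    Matrix.cons_val_zero, Matrix.cons_val_one, RCLike.inner_apply, conj_trivial]
  ring

theorem inner_counterF_self {x : EuclideanSpace ℝ (Fin 2)} (hx : 3/4 ≤ ‖x‖) :
    inner ℝ (counterF x) x = ‖x‖ * (1 - ‖x‖) := by
  have hx0 : ‖x‖ ≠ 0 := by positivity
  rw [counterF, radialSpeed, if_pos hx, inner_add_left, real_inner_smul_left,
    real_inner_smul_left, inner_vec2_rotation_self, real_inner_self_eq_norm_sq]
  field_simp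
  ring

/-- Lyapunov decrease identity for the counterexample. -/
theorem counterexample_decrease_identity :
    (∀ x : EuclideanSpace ℝ (Fin 2), 3/4 ≤ ‖x‖ →
      (inner ℝ (counterF x) (Real.sign (‖x‖ - 1) • x) : ℝ) = -(‖x‖ * |1 - ‖x‖|)) ∧
    (∀ x : EuclideanSpace ℝ (Fin 2), 3/4 ≤ ‖x‖ → ‖x‖ ≠ 1 →
      (inner ℝ (counterF x) (Real.sign (‖x‖ - 1) • x) : ℝ) < 0) := by
  have identity : ∀ x : EuclideanSpace ℝ (Fin 2), 3/4 ≤ ‖x‖ →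
      (inner ℝ (counterF x) (Real.sign (‖x‖ - 1) • x) : ℝ) = -(‖x‖ * |1 - ‖x‖|) := by
    intro x hx
    rw [real_inner_smul_right, inner_counterF_self hx, abs_sub_comm, ← Real.sign_mul_self]
    ring
  refine ⟨identity, fun x hx hne => ?_⟩
  rw [identity x hx, neg_neg_iff_pos]
  exact mul_pos (by linarith) (abs_pos.2 (sub_ne_zero.2 hne.symm))
end

section
/- Let f : ℝ² → ℝ² be the counterexample vector field, and let x : ℝ → ℝ² satisfy ‖x(0)‖ ≥ 3/4 and, for every t ≥ 0, x is differentiable at t with derivative f(x(t)). Then for every t ≥ 0, ‖x(t)‖ = 1 + (‖x(0)‖ − 1)·e^{−t}. -/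
open scoped RealInnerProductSpace

section
variable {F : Type*} [NormedAddCommGroup F]

theorem HasDerivAt.norm_of_eq_zero [NormedSpace ℝ F] {f : ℝ → F} {t : ℝ}
    (hf : HasDerivAt f 0 t) (h : f t = 0) : HasDerivAt (‖f ·‖) 0 t := by
  rw [hasDerivAt_iff_isLittleO] at hf ⊢
  simpa [h] using hf.norm_left

theorem HasDerivAt.norm [InnerProductSpace ℝ F] {f : ℝ → F} {f' : F} {t : ℝ}
    (hf : HasDerivAt f f' t) (h : f t ≠ 0) : HasDerivAt (‖f ·‖) (⟪f t, f'⟫ / ‖f t‖) t := by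
  have hsq : ‖f t‖ ^ 2 ≠ 0 := by positivity
  convert hf.norm_sq.sqrt hsq using 1
  · simp [Real.sqrt_sq (norm_nonneg _)]
  · rw [Real.sqrt_sq (norm_nonneg _)]
    field_simp

theorem ODE_solution_unique_Ici [NormedSpace ℝ F] {v : F → F} {K : NNReal} {f g : ℝ → F} {a : ℝ}
    (hv : LipschitzWith K v) (hf : ∀ t, a ≤ t → HasDerivAt f (v (f t)) t)
    (hg : ∀ t, a ≤ t → HasDerivAt g (v (g t)) t) (ha : f a = g a) :
    Set.EqOn f g (Set.Ici a) := fun _ ht =>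
  ODE_solution_unique (v := fun _ => v) (fun _ => hv)
    (fun s hs => (hf s hs.1).continuousAt.continuousWithinAt)
    (fun s hs => (hf s hs.1).hasDerivWithinAt)
    (fun s hs => (hg s hs.1).continuousAt.continuousWithinAt)
    (fun s hs => (hg s hs.1).hasDerivWithinAt) ha ⟨ht, le_rfl⟩

end

/-- `r ↦ r · v_r(r)`: the three linear pieces `1 - r`, `r - 1/2`, `-r` glue continuously at
`r = 3/4` and `r = 1/4`, so on `r ≥ 0` they combine into this min/max expression. -/
noncomputable def radialProfile (r : ℝ) : ℝ :=
  min (1 - r) (max (r - 1/2) (-r))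

lemma lipschitzWith_radialProfile : LipschitzWith 1 radialProfile := by
  have h₁ : LipschitzWith 1 fun r : ℝ => 1 - r := by
    simpa using (LipschitzWith.const (1 : ℝ)).sub LipschitzWith.id
  have h₂ : LipschitzWith 1 fun r : ℝ => r - 1/2 := by
    simpa using LipschitzWith.id.sub (LipschitzWith.const (1/2 : ℝ))
  exact (h₁.min (h₂.max LipschitzWith.id.neg)).weaken (by simp)

lemma radialProfile_of_three_quarters_le {r : ℝ} (hr : 3/4 ≤ r) : radialProfile r = 1 - r :=
  min_eq_left (le_max_of_le_left (by linarith))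

lemma radialSpeed_mul_norm (y : EuclideanSpace ℝ (Fin 2)) :
    radialSpeed y * ‖y‖ = radialProfile ‖y‖ := by
  have hy := norm_nonneg y
  rw [radialSpeed, radialProfile]
  split_ifs with h₁ h₂
  · rw [min_eq_left (le_max_of_le_left (by linarith))]
    field_simp
  · rw [max_eq_left (by linarith), min_eq_right (by linarith)]
    field_simp
  · rw [max_eq_right (by linarith), min_eq_right (by linarith)]
    ring

lemma inner_self_counterF (y : EuclideanSpace ℝ (Fin 2)) :
    ⟪y, counterF y⟫ = radialSpeed y * ‖y‖ ^ 2 := by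
  have hrot : ⟪y, vec2 (-(y 1)) (y 0)⟫ = 0 := by
    simp [vec2, PiLp.inner_apply, Fin.sum_univ_two, RCLike.inner_apply]
    ring
  rw [counterF, inner_add_right, real_inner_smul_right, real_inner_smul_right, hrot,
    real_inner_self_eq_norm_sq]
  ring

lemma hasDerivAt_norm_of_hasDerivAt_counterF {x : ℝ → EuclideanSpace ℝ (Fin 2)} {t : ℝ}
    (hx : HasDerivAt x (counterF (x t)) t) :
    HasDerivAt (‖x ·‖) (radialProfile ‖x t‖) t := by
  by_cases h : x t = 0
  · rw [h, counterF, radialSpeed] at hx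
    simpa [h, radialProfile] using (by simpa using hx : HasDerivAt x 0 t).norm_of_eq_zero h
  · convert hx.norm h using 1
    rw [inner_self_counterF, ← radialSpeed_mul_norm]
    field_simp

lemma hasDerivAt_one_add_mul_exp_neg (c t : ℝ) :
    HasDerivAt (fun s => 1 + c * Real.exp (-s)) (1 - (1 + c * Real.exp (-t))) t :=
  ((hasDerivAt_neg t).exp.const_mul c).const_add 1 |>.congr_deriv (by ring)

lemma three_quarters_le_one_add_mul_exp_neg {r₀ t : ℝ} (h₀ : 3/4 ≤ r₀) (ht : 0 ≤ t) :
    3/4 ≤ 1 + (r₀ - 1) * Real.exp (-t) := by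
  have hexp : Real.exp (-t) ≤ 1 := Real.exp_le_one_iff.mpr (by linarith)
  rcases le_total r₀ 1 with h | h
  · nlinarith
  · nlinarith [Real.exp_pos (-t)]

/-- radial behaviour of trajectories starting with `‖x(0)‖ ≥ 3/4`. -/
theorem counterexample_radial_outer
    (x : ℝ → EuclideanSpace ℝ (Fin 2))
    (h0 : 3/4 ≤ ‖x 0‖)
    (hx : ∀ t : ℝ, 0 ≤ t → HasDerivAt x (counterF (x t)) t) :
    ∀ t : ℝ, 0 ≤ t → ‖x t‖ = 1 + (‖x 0‖ - 1) * Real.exp (-t) := by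
  intro t ht
  refine ODE_solution_unique_Ici (g := fun s => 1 + (‖x 0‖ - 1) * Real.exp (-s))
    lipschitzWith_radialProfile (fun s hs => hasDerivAt_norm_of_hasDerivAt_counterF (hx s hs))
    (fun s hs => ?_) (by simp) ht
  rw [radialProfile_of_three_quarters_le (three_quarters_le_one_add_mul_exp_neg h0 hs)]
  exact hasDerivAt_one_add_mul_exp_neg _ s
end
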